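/- If A is an n×m matrix with unit-norm columns satisfying URP, and s has at least m−n elements with absolute value less than α and satisfies ‖As‖ < ε, then ‖s‖ < (M+1)(mα + ε), where M is the maximal left-inverse norm over submatrices of A with at most n columns. -/

import Mathlib

open Matrix Finset Filter

noncomputable def vnorm {k : ℕ} (s : Fin k → ℝ) : ℝ := Real.sqrt (∑ i, (s i)^2)

noncomputable def mnorm {p q : ℕ} (L : Matrix (Fin p) (Fin q) ℝ) : ℝ :=
  Real.sqrt (∑ i, ∑ j, (L i j)^2)

def URP {n m : ℕ} (A : Matrix (Fin n) (Fin m) ℝ) : Prop :=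
  ∀ g : Fin n → Fin m, Function.Injective g → (A.submatrix id g).det ≠ 0

def UnitCols {n m : ℕ} (A : Matrix (Fin n) (Fin m) ℝ) : Prop :=
  ∀ j, vnorm (fun i => A i j) = 1

def LeftInvBound {n m : ℕ} (A : Matrix (Fin n) (Fin m) ℝ) (M : ℝ) : Prop :=
  ∀ (k : ℕ), k ≤ n → ∀ g : Fin k → Fin m, Function.Injective g →
    ∃ L : Matrix (Fin k) (Fin n) ℝ, L * A.submatrix id g = 1 ∧ mnorm L ≤ M

/-! The entries with `|s i| ≥ α` live on a set `T` of at most `n` indices. On `T` the columns of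
`A` have a left inverse `L` with `mnorm L ≤ M`, so the head of `s` is recovered from
`A s - A (tail)`; since the columns are unit vectors, the tail (entries below `α`) changes both
`A s` and `s` by at most its `ℓ¹` norm `≤ m α`. -/

lemma vnorm_eq_norm {k : ℕ} (v : Fin k → ℝ) : vnorm v = ‖WithLp.toLp 2 v‖ := by
  simp [EuclideanSpace.norm_eq, vnorm, sq_abs]

lemma vnorm_nonneg {k : ℕ} (v : Fin k → ℝ) : 0 ≤ vnorm v := Real.sqrt_nonneg _

lemma vnorm_sub_le {k : ℕ} (v w : Fin k → ℝ) : vnorm (v - w) ≤ vnorm v + vnorm w := by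
  simpa only [vnorm_eq_norm, WithLp.toLp_sub] using norm_sub_le _ _

lemma vnorm_add_le {k : ℕ} (v w : Fin k → ℝ) : vnorm (v + w) ≤ vnorm v + vnorm w := by
  simpa only [vnorm_eq_norm, WithLp.toLp_add] using norm_add_le _ _

lemma vnorm_sum_le {k : ℕ} {ι : Type*} (t : Finset ι) (f : ι → Fin k → ℝ) :
    vnorm (∑ j ∈ t, f j) ≤ ∑ j ∈ t, vnorm (f j) := by
  simpa only [vnorm_eq_norm, WithLp.toLp_sum] using norm_sum_le _ _

lemma vnorm_smul {k : ℕ} (c : ℝ) (v : Fin k → ℝ) : vnorm (c • v) = |c| * vnorm v := by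
  rw [vnorm_eq_norm, vnorm_eq_norm, WithLp.toLp_smul, norm_smul, Real.norm_eq_abs]

lemma vnorm_le_sum_abs {k : ℕ} (v : Fin k → ℝ) : vnorm v ≤ ∑ i, |v i| :=
  Real.sqrt_le_iff.mpr ⟨by positivity, by
    simpa only [sq_abs] using sum_sq_le_sq_sum_of_nonneg fun i _ => abs_nonneg (v i)⟩

lemma vnorm_mulVec_le {p q : ℕ} (L : Matrix (Fin p) (Fin q) ℝ) (v : Fin q → ℝ) :
    vnorm (L *ᵥ v) ≤ mnorm L * vnorm v := by
  have cauchy_schwarz : ∑ i, (L *ᵥ v) i ^ 2 ≤ (∑ i, ∑ j, L i j ^ 2) * ∑ j, v j ^ 2 := by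
    rw [Finset.sum_mul]
    refine Finset.sum_le_sum fun i _ => ?_
    simpa [Matrix.mulVec, dotProduct] using
      Finset.sum_mul_sq_le_sq_mul_sq Finset.univ (fun j => L i j) v
  calc vnorm (L *ᵥ v) ≤ Real.sqrt ((∑ i, ∑ j, L i j ^ 2) * ∑ j, v j ^ 2) :=
        Real.sqrt_le_sqrt cauchy_schwarz
    _ = mnorm L * vnorm v := Real.sqrt_mul (by positivity) _

lemma vnorm_le_of_mul_eq_one {p q : ℕ} {L : Matrix (Fin p) (Fin q) ℝ}
    {B : Matrix (Fin q) (Fin p) ℝ} (hLB : L * B = 1) (x : Fin p → ℝ) :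
    vnorm x ≤ mnorm L * vnorm (B *ᵥ x) := by
  simpa only [mulVec_mulVec, hLB, one_mulVec] using vnorm_mulVec_le L (B *ᵥ x)

lemma UnitCols.vnorm_mulVec_le_sum_abs {n m : ℕ} {A : Matrix (Fin n) (Fin m) ℝ}
    (hA : UnitCols A) (v : Fin m → ℝ) : vnorm (A *ᵥ v) ≤ ∑ j, |v j| := by
  have columns : A *ᵥ v = ∑ j, v j • fun i => A i j := by
    ext i
    simp [mulVec, dotProduct, mul_comm]
  calc vnorm (A *ᵥ v) ≤ ∑ j, vnorm (v j • fun i => A i j) := columns ▸ vnorm_sum_le _ _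
    _ = ∑ j, |v j| := by simp only [vnorm_smul, hA _, mul_one]

lemma LeftInvBound.nonneg {n m : ℕ} {A : Matrix (Fin n) (Fin m) ℝ} {M : ℝ}
    (hM : LeftInvBound A M) : 0 ≤ M := by
  obtain ⟨L, -, hL⟩ := hM 0 n.zero_le Fin.elim0 fun a => a.elim0
  exact (Real.sqrt_nonneg _).trans hL

section Support

variable {m : ℕ} (T : Finset (Fin m))

lemma sum_comp_orderEmbOfFin {β : Type*} [AddCommMonoid β] (f : Fin m → β) :
    ∑ p, f (T.orderEmbOfFin rfl p) = ∑ j ∈ T, f j := by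
  conv_rhs => rw [← T.map_orderEmbOfFin_univ rfl, Finset.sum_map]
  rfl

lemma submatrix_mulVec_comp_orderEmbOfFin {n : ℕ} (A : Matrix (Fin n) (Fin m) ℝ)
    (s : Fin m → ℝ) :
    A.submatrix id (T.orderEmbOfFin rfl) *ᵥ (s ∘ T.orderEmbOfFin rfl) =
      A *ᵥ (T : Set (Fin m)).indicator s := by
  ext i
  simp only [mulVec, dotProduct, submatrix_apply, id_eq, Function.comp_apply,
    sum_comp_orderEmbOfFin T fun j => A i j * s j, Set.indicator_apply, Finset.mem_coe,
    mul_ite, mul_zero, Finset.sum_ite_mem, Finset.univ_inter]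

lemma vnorm_comp_orderEmbOfFin (s : Fin m → ℝ) :
    vnorm (s ∘ T.orderEmbOfFin rfl) = vnorm ((T : Set (Fin m)).indicator s) := by
  simp only [vnorm, Function.comp_apply, sum_comp_orderEmbOfFin T fun j => s j ^ 2,
    Set.indicator_apply, Finset.mem_coe, ite_pow, zero_pow two_ne_zero, Finset.sum_ite_mem,
    Finset.univ_inter]

end Support

lemma vnorm_le_of_leftInvBound {n m : ℕ} {A : Matrix (Fin n) (Fin m) ℝ} {M : ℝ}
    (hA : UnitCols A) (hM : LeftInvBound A M) (s : Fin m → ℝ) {T : Finset (Fin m)}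
    (hT : T.card ≤ n) :
    vnorm s ≤ M * (vnorm (A *ᵥ s) + ∑ j, |(↑T : Set (Fin m))ᶜ.indicator s j|) +
      ∑ j, |(↑T : Set (Fin m))ᶜ.indicator s j| := by
  set tail := (↑T : Set (Fin m))ᶜ.indicator s
  set head := (↑T : Set (Fin m)).indicator s
  have hsplit : head + tail = s := Set.indicator_self_add_compl _ _
  obtain ⟨L, hLB, hL⟩ := hM _ hT _ (T.orderEmbOfFin rfl).injective
  have hhead : vnorm head ≤ M * (vnorm (A *ᵥ s) + ∑ j, |tail j|) :=
    calc vnorm head = vnorm (s ∘ T.orderEmbOfFin rfl) := (vnorm_comp_orderEmbOfFin T s).symm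
      _ ≤ mnorm L * vnorm (A *ᵥ head) := by
        rw [← submatrix_mulVec_comp_orderEmbOfFin]
        exact vnorm_le_of_mul_eq_one hLB _
      _ = mnorm L * vnorm (A *ᵥ s - A *ᵥ tail) := by
        rw [← hsplit, mulVec_add, add_sub_cancel_right]
      _ ≤ M * (vnorm (A *ᵥ s) + ∑ j, |tail j|) := by
        have hM0 := hM.nonneg
        gcongr
        · exact vnorm_nonneg _
        · exact (vnorm_sub_le _ _).trans (by gcongr; exact hA.vnorm_mulVec_le_sum_abs tail)
  calc vnorm s ≤ vnorm head + vnorm tail := hsplit ▸ vnorm_add_le head tail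
    _ ≤ _ := add_le_add hhead (vnorm_le_sum_abs tail)

theorem stmt12_general {n m : ℕ} (A : Matrix (Fin n) (Fin m) ℝ)
    (hcols : UnitCols A) (M : ℝ) (hM : LeftInvBound A M)
    (s : Fin m → ℝ) (α ε : ℝ) (hα : 0 < α)
    (hcard : (m - n : ℕ) ≤ (Finset.univ.filter fun i => |s i| < α).card)
    (hAs : vnorm (A.mulVec s) < ε) :
    vnorm s < (M + 1) * (m * α + ε) := by
  have hT : (Finset.univ.filter fun i => α ≤ |s i|).card ≤ n := by
    have := Finset.card_filter_add_card_filter_not (s := Finset.univ) (fun i => α ≤ |s i|)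
    simp only [not_le, Finset.card_univ, Fintype.card_fin] at this
    omega
  set T := Finset.univ.filter fun i => α ≤ |s i|
  have htail : ∑ j, |(↑T : Set (Fin m))ᶜ.indicator s j| ≤ m * α :=
    calc ∑ j, |(↑T : Set (Fin m))ᶜ.indicator s j| ≤ ∑ _j : Fin m, α := by
          refine Finset.sum_le_sum fun j _ => ?_
          rw [Set.indicator_apply]
          split_ifs with hj
          · exact (not_le.mp (by simpa [T] using hj)).le
          · simpa using hα.le
      _ = m * α := by simp
  have hM0 := hM.nonneg
  have hε : 0 < ε := (vnorm_nonneg _).trans_lt hAs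
  calc vnorm s ≤ M * (ε + m * α) + m * α := by
        grw [vnorm_le_of_leftInvBound hcols hM s hT, htail, hAs.le]
    _ < (M + 1) * (m * α + ε) := by linarith

theorem stmt12 {n m : ℕ} (hnm : n < m) (A : Matrix (Fin n) (Fin m) ℝ)
    (hcols : UnitCols A) (hURP : URP A) (M : ℝ) (hM : LeftInvBound A M)
    (s : Fin m → ℝ) (α ε : ℝ) (hα : 0 < α) (hε : 0 < ε)
    (hcard : (m - n : ℕ) ≤ (Finset.univ.filter fun i => |s i| < α).card)
    (hAs : vnorm (A.mulVec s) < ε) :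
    vnorm s < (M + 1) * (m * α + ε) :=
  stmt12_general A hcols M hM s α ε hα hcard hAs
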